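/- arXiv:2301.12197 — 2 statements merged into one kernel-verified Lean document; each statement's English description precedes it below -/
import Mathlib

section
/- Let X be a nonempty measurable space and fix a sample size N ≥ 1 and a confidence parameter δ ∈ (0,1). Suppose F : X^N × X^N → ℝ is a measurable function that is a sound high-confidence lower bound on KL divergence, i.e., for every pair of probability measures p, q on X, the set of sample pairs (A,B) ∈ X^N × X^N with F(A,B) ≤ D_KL(p‖q) has (p^{⊗N} ⊗ q^{⊗N})-measure at least 1−δ. Then for every pair of probability measures p, q on X, the set of sample pairs (A,B) with F(A,B) ≤ ln N has (p^{⊗N} ⊗ q^{⊗N})-measure at least 1−4δ. -/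
/-!
If `D(p'‖q') ≤ log N`, soundness of `F` at `(p', q')` makes `F ≤ log N` fail with probability at
most `δ` under `p'^N ⊗ q'^N`; if moreover `p ≤ a • p'` and `q ≤ b • q'`, the same event has
probability at most `(a b)^N δ` under `p^N ⊗ q^N`. For `N = k + 1 ≥ 2` take `p' = p` and the
mixture `q' = m = p / N + (1 - 1 / N) q`: then `p ≤ N • m`, so `dp/dm ≤ N` and `D(p‖m) ≤ log N`,
while `q ≤ (1 + 1/k) • m` and `(1 + 1/k)^(k+1) ≤ 4`. For `N ≤ 1` take `p' = q' = (p + q) / 2`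
and `a = b = 2`.
-/

open MeasureTheory
open scoped Classical

/-- The Kullback–Leibler divergence `D_KL(p‖q)`, valued in the extended reals:
it is `∫ log (dp/dq) dp` when `p ≪ q` and the log-likelihood ratio is integrable,
and `+∞` otherwise. -/
noncomputable def klDiv {X : Type*} [MeasurableSpace X] (p q : Measure X) : EReal :=
  if p ≪ q ∧ Integrable (llr p q) p then ((∫ x, llr p q x ∂p : ℝ) : EReal) else ⊤

open scoped NNReal ENNReal

namespace MeasureTheory

namespace Measure

theorem pi_mono {ι : Type*} [Fintype ι] {α : ι → Type*} [∀ i, MeasurableSpace (α i)]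
    {μ ν : ∀ i, Measure (α i)} (h : ∀ i, μ i ≤ ν i) : Measure.pi μ ≤ Measure.pi ν := by
  rw [Measure.le_iff]
  intro s hs
  rw [Measure.pi_def, Measure.pi_def, toMeasure_apply _ _ hs, toMeasure_apply _ _ hs]
  simp only [OuterMeasure.pi, OuterMeasure.boundedBy_apply]
  refine le_iInf fun t => le_iInf fun hsub => ?_
  refine iInf_le_of_le t (iInf_le_of_le hsub (ENNReal.tsum_le_tsum fun n => ?_))
  refine iSup_le fun hne => le_iSup_of_le hne ?_
  exact Finset.prod_le_prod' fun i _ => Measure.le_iff'.mp (h i) _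

theorem pi_smul {ι : Type*} [Fintype ι] {α : ι → Type*} [∀ i, MeasurableSpace (α i)]
    (μ : ∀ i, Measure (α i)) [∀ i, SigmaFinite (μ i)] (c : ι → ℝ≥0) :
    Measure.pi (fun i => c i • μ i) = (∏ i, c i) • Measure.pi μ := by
  refine Measure.pi_eq fun s _ => ?_
  rw [Measure.smul_apply, Measure.pi_pi, ENNReal.smul_def, smul_eq_mul,
    ENNReal.ofNNReal_finsetProd, ← Finset.prod_mul_distrib]
  rfl

section

variable {α β : Type*} [MeasurableSpace α] [MeasurableSpace β]

theorem pi_prod_pi_le_smul {ι : Type*} [Fintype ι] {μ μ' : Measure α} {ν ν' : Measure β}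
    [SigmaFinite μ'] [SigmaFinite ν'] {a b : ℝ≥0} (hμ : μ ≤ a • μ') (hν : ν ≤ b • ν') :
    (Measure.pi fun _ : ι => μ).prod (Measure.pi fun _ : ι => ν) ≤
      ((a * b) ^ Fintype.card ι) •
        (Measure.pi fun _ : ι => μ').prod (Measure.pi fun _ : ι => ν') := by
  calc (Measure.pi fun _ : ι => μ).prod (Measure.pi fun _ : ι => ν)
      ≤ (Measure.pi fun _ : ι => a • μ').prod (Measure.pi fun _ : ι => b • ν') :=
        prod_mono (pi_mono fun _ => hμ) (pi_mono fun _ => hν)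
    _ = _ := by
        rw [pi_smul (fun _ => μ') (fun _ => a), pi_smul (fun _ => ν') (fun _ => b),
          prod_smul_left, prod_smul_right, smul_smul]
        simp [mul_pow]

theorem le_inv_smul_smul_add_smul (μ ν : Measure α) {s : ℝ≥0} (hs : s ≠ 0) (t : ℝ≥0) :
    μ ≤ s⁻¹ • (s • μ + t • ν) := by
  rw [smul_add, smul_smul, inv_mul_cancel₀ hs, one_smul]
  exact Measure.le_add_right le_rfl

theorem rnDeriv_le_of_le_smul {μ ν : Measure α} [SigmaFinite ν] {c : ℝ≥0∞} (h : μ ≤ c • ν) :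
    μ.rnDeriv ν ≤ᵐ[ν] fun _ => c :=
  ae_le_of_forall_setLIntegral_le_of_sigmaFinite (measurable_rnDeriv _ _) fun s _ _ => by
    rw [setLIntegral_const]
    exact (setLIntegral_rnDeriv_le s).trans (h s)

end

end Measure

variable {α : Type*} [MeasurableSpace α]

theorem isProbabilityMeasure_smul_add_smul (μ ν : Measure α) [IsProbabilityMeasure μ]
    [IsProbabilityMeasure ν] {s t : ℝ≥0} (hst : s + t = 1) :
    IsProbabilityMeasure (s • μ + t • ν) :=
  ⟨by simp [← ENNReal.coe_add, hst]⟩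

theorem ofReal_one_sub_le_iff_measure_compl_le {μ : Measure α} [IsProbabilityMeasure μ]
    {s : Set α} (hs : MeasurableSet s) {δ : ℝ} (hδ : 0 ≤ δ) :
    ENNReal.ofReal (1 - δ) ≤ μ s ↔ μ sᶜ ≤ ENNReal.ofReal δ := by
  rw [prob_compl_eq_one_sub hs, ENNReal.ofReal_sub _ hδ, ENNReal.ofReal_one, tsub_le_iff_tsub_le]

theorem integrable_llr_of_le_smul {μ ν : Measure α} [IsFiniteMeasure μ] [IsFiniteMeasure ν]
    {c : ℝ≥0} (h : μ ≤ c • ν) : Integrable (llr μ ν) μ := by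
  refine (integrable_rnDeriv_mul_log_iff (Measure.absolutelyContinuous_of_le_smul h)).1 ?_
  obtain ⟨C, hC⟩ := isCompact_Icc.exists_bound_of_continuousOn
    (Real.continuous_mul_log.continuousOn (s := Set.Icc 0 (c : ℝ)))
  refine Integrable.of_bound (by fun_prop) C ?_
  filter_upwards [Measure.rnDeriv_le_of_le_smul h] with x hle
  exact hC _ ⟨ENNReal.toReal_nonneg, ENNReal.toReal_le_of_le_ofReal c.2 (by simpa using hle)⟩

end MeasureTheory

theorem klDiv_le_log_of_le_smul {α : Type*} [MeasurableSpace α] {μ ν : Measure α}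
    [IsProbabilityMeasure μ] [IsFiniteMeasure ν] {c : ℝ≥0} (h : μ ≤ c • ν) :
    klDiv μ ν ≤ Real.log c := by
  have hac : μ ≪ ν := Measure.absolutelyContinuous_of_le_smul h
  have hllr : ∀ᵐ x ∂μ, llr μ ν x ≤ Real.log c := by
    filter_upwards [hac.ae_le (Measure.rnDeriv_le_of_le_smul h), Measure.rnDeriv_pos hac,
      hac.ae_le (Measure.rnDeriv_lt_top μ ν)] with x hle hpos hlt
    exact Real.log_le_log (ENNReal.toReal_pos hpos.ne' hlt.ne)
      (ENNReal.toReal_le_of_le_ofReal c.2 (by simpa using hle))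
  rw [klDiv, if_pos ⟨hac, integrable_llr_of_le_smul h⟩, EReal.coe_le_coe_iff]
  simpa using integral_mono_ae (integrable_llr_of_le_smul h) (integrable_const _) hllr

theorem one_add_inv_pow_succ_le_four {k : ℕ} (hk : 1 ≤ k) : (1 + (k : ℝ)⁻¹) ^ (k + 1) ≤ 4 := by
  obtain rfl | rfl | hk3 : k = 1 ∨ k = 2 ∨ 3 ≤ k := by omega
  · norm_num
  · norm_num
  have hinv : (k : ℝ)⁻¹ ≤ 1 / 3 := by
    rw [inv_le_comm₀ (by positivity) (by norm_num)]
    norm_num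
    exact_mod_cast hk3
  calc (1 + (k : ℝ)⁻¹) ^ (k + 1) = (1 + (k : ℝ)⁻¹) ^ k * (1 + (k : ℝ)⁻¹) := pow_succ _ _
    _ ≤ Real.exp 1 * (1 + 1 / 3) := by
        gcongr
        exact Real.one_add_inv_pow_le_exp
    _ ≤ 4 := by nlinarith [Real.exp_one_lt_d9]

theorem exists_le_smul_le_smul_klDiv_le_log {X : Type*} [MeasurableSpace X] (p q : Measure X)
    [IsProbabilityMeasure p] [IsProbabilityMeasure q] (N : ℕ) :
    ∃ (p' q' : Measure X) (a b : ℝ≥0), IsProbabilityMeasure p' ∧ IsProbabilityMeasure q' ∧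
      p ≤ a • p' ∧ q ≤ b • q' ∧ (a * b) ^ N ≤ 4 ∧ klDiv p' q' ≤ Real.log N := by
  obtain hN | ⟨k, hk, rfl⟩ : N ≤ 1 ∨ ∃ k, 1 ≤ k ∧ N = k + 1 := by
    rcases le_or_gt N 1 with h | h
    · exact .inl h
    · exact .inr ⟨N - 1, by omega, by omega⟩
  · set m := (2⁻¹ : ℝ≥0) • p + (2⁻¹ : ℝ≥0) • q
    have hm : IsProbabilityMeasure m := isProbabilityMeasure_smul_add_smul p q (by norm_num)
    refine ⟨m, m, 2, 2, hm, hm, ?_, ?_, ?_, ?_⟩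
    · simpa only [inv_inv] using Measure.le_inv_smul_smul_add_smul p q (s := 2⁻¹) (by norm_num) 2⁻¹
    · simpa only [inv_inv, m, add_comm] using
        Measure.le_inv_smul_smul_add_smul q p (s := 2⁻¹) (by norm_num) 2⁻¹
    · calc ((2 : ℝ≥0) * 2) ^ N ≤ (2 * 2) ^ 1 := pow_le_pow_right₀ (by norm_num) hN
        _ = 4 := by norm_num
    -- `Real.log 0 = 0`, so `N = 0` is covered as well
    · have hlog : Real.log N = Real.log (1 : ℝ≥0) := by
        interval_cases N <;> simp
      rw [hlog]
      exact klDiv_le_log_of_le_smul (by simp)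
  · set m := ((k : ℝ≥0) + 1)⁻¹ • p + ((k : ℝ≥0) / (k + 1)) • q
    have hm : IsProbabilityMeasure m :=
      isProbabilityMeasure_smul_add_smul p q (by field_simp; ring)
    have hpm : p ≤ ((k : ℝ≥0) + 1) • m := by
      simpa only [inv_inv] using Measure.le_inv_smul_smul_add_smul p q (s := ((k : ℝ≥0) + 1)⁻¹)
        (by positivity) _
    have hqm : q ≤ (1 + (k : ℝ≥0)⁻¹) • m := by
      have hb : ((k : ℝ≥0) / (k + 1))⁻¹ = 1 + (k : ℝ≥0)⁻¹ := by field_simp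
      have := Measure.le_inv_smul_smul_add_smul q p (s := (k : ℝ≥0) / (k + 1)) (by positivity)
        ((k : ℝ≥0) + 1)⁻¹
      rwa [hb, add_comm (_ • q)] at this
    refine ⟨p, m, 1, 1 + (k : ℝ≥0)⁻¹, inferInstance, hm, by simp, hqm, ?_, ?_⟩
    · rw [one_mul, ← NNReal.coe_le_coe]
      push_cast
      exact one_add_inv_pow_succ_le_four hk
    · simpa using klDiv_le_log_of_le_smul hpm

theorem highConfidence_klDiv_lowerBound_le_log_sampleSize_general
    {X : Type*} [MeasurableSpace X]
    (N : ℕ) (δ : ℝ) (hδ0 : 0 < δ)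
    (F : ((Fin N → X) × (Fin N → X)) → ℝ) (hF : Measurable F)
    (hsound : ∀ p q : Measure X, IsProbabilityMeasure p → IsProbabilityMeasure q →
      ENNReal.ofReal (1 - δ) ≤
        ((Measure.pi fun _ : Fin N => p).prod (Measure.pi fun _ : Fin N => q))
          {AB | (F AB : EReal) ≤ klDiv p q}) :
    ∀ p q : Measure X, IsProbabilityMeasure p → IsProbabilityMeasure q →
      ENNReal.ofReal (1 - 4 * δ) ≤
        ((Measure.pi fun _ : Fin N => p).prod (Measure.pi fun _ : Fin N => q))
          {AB | F AB ≤ Real.log N} := by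
  intro p q _ _
  obtain ⟨p', q', a, b, _, _, hpa, hqb, hab, hkl⟩ := exists_le_smul_le_smul_klDiv_le_log p q N
  have hS : MeasurableSet {AB | F AB ≤ Real.log N} := measurableSet_le hF measurable_const
  have hbad : ((Measure.pi fun _ : Fin N => p').prod (Measure.pi fun _ : Fin N => q'))
      {AB | F AB ≤ Real.log N}ᶜ ≤ ENNReal.ofReal δ := by
    refine (ofReal_one_sub_le_iff_measure_compl_le hS hδ0.le).1
      ((hsound p' q' ‹_› ‹_›).trans (measure_mono ?_))
    exact fun AB h => EReal.coe_le_coe_iff.1 (h.trans hkl)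
  rw [ofReal_one_sub_le_iff_measure_compl_le hS (by positivity)]
  calc _ ≤ ((a * b) ^ N • (Measure.pi fun _ : Fin N => p').prod
          (Measure.pi fun _ : Fin N => q')) {AB | F AB ≤ Real.log N}ᶜ := by
        simpa using Measure.pi_prod_pi_le_smul (ι := Fin N) hpa hqb _
    _ ≤ 4 * ENNReal.ofReal δ := by
        rw [Measure.smul_apply, ENNReal.smul_def, smul_eq_mul]
        gcongr
        exact_mod_cast hab
    _ = ENNReal.ofReal (4 * δ) := by rw [ENNReal.ofReal_mul (by norm_num), ENNReal.ofReal_ofNat]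

/-- If `F` is a measurable high-confidence (level `1 - δ`) lower bound on the KL divergence
between any two probability measures, evaluated on `N` i.i.d. samples from each, then with
probability at least `1 - 4δ` it does not exceed `ln N`. -/
theorem highConfidence_klDiv_lowerBound_le_log_sampleSize
    {X : Type*} [MeasurableSpace X] [Nonempty X]
    (N : ℕ) (hN : 1 ≤ N) (δ : ℝ) (hδ0 : 0 < δ) (hδ1 : δ < 1)
    (F : ((Fin N → X) × (Fin N → X)) → ℝ) (hF : Measurable F)
    (hsound : ∀ p q : Measure X, IsProbabilityMeasure p → IsProbabilityMeasure q →
      ENNReal.ofReal (1 - δ) ≤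
        ((Measure.pi fun _ : Fin N => p).prod (Measure.pi fun _ : Fin N => q))
          {AB | (F AB : EReal) ≤ klDiv p q}) :
    ∀ p q : Measure X, IsProbabilityMeasure p → IsProbabilityMeasure q →
      ENNReal.ofReal (1 - 4 * δ) ≤
        ((Measure.pi fun _ : Fin N => p).prod (Measure.pi fun _ : Fin N => q))
          {AB | F AB ≤ Real.log N} :=
  highConfidence_klDiv_lowerBound_le_log_sampleSize_general N δ hδ0 F hF hsound
end

section
/- Let p and q be probability measures on ℝ with finite second moments, with means μ_p, μ_q and standard deviations σ_p, σ_q. Then for every coupling π of p and q, the quadratic transport cost satisfies ∫ (x−y)² dπ(x,y) ≥ (μ_p − μ_q)² + (σ_p − σ_q)². -/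
/-!
Write `X`, `Y` for the two coordinates under the coupling `π`. Then
`∫ (X - Y)² dπ = (E X - E Y)² + Var (X - Y)`, and `Var (X - Y) = σ_X² - 2 cov(X, Y) + σ_Y²`
with `cov(X, Y) ≤ σ_X σ_Y` by Cauchy–Schwarz, so `Var (X - Y) ≥ (σ_X - σ_Y)²`. The laws of
`X` and `Y` are `p` and `q`, which turns the means and deviations into those of `p` and `q`.
-/

open MeasureTheory ProbabilityTheory

namespace ProbabilityTheory

variable {Ω : Type*} {mΩ : MeasurableSpace Ω} {μ : Measure Ω} {X Y : Ω → ℝ}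

lemma covariance_sq_le_variance_mul_variance [IsFiniteMeasure μ] (hX : MemLp X 2 μ)
    (hY : MemLp Y 2 μ) : cov[X, Y; μ] ^ 2 ≤ Var[X; μ] * Var[Y; μ] := by
  -- `t ↦ Var[t • X - Y]` is a nonnegative quadratic polynomial, so its discriminant is `≤ 0`.
  have h_quadratic_nonneg :
      ∀ t : ℝ, 0 ≤ Var[X; μ] * (t * t) + (-2 * cov[X, Y; μ]) * t + Var[Y; μ] := by
    intro t
    have h := variance_nonneg (t • X - Y) μ
    rw [variance_sub (hX.const_smul t) hY, variance_smul, covariance_smul_left] at h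
    linarith
  have := discrim_le_zero h_quadratic_nonneg
  rw [discrim] at this
  linarith

lemma covariance_le_sqrt_variance_mul_sqrt_variance [IsFiniteMeasure μ] (hX : MemLp X 2 μ)
    (hY : MemLp Y 2 μ) : cov[X, Y; μ] ≤ √Var[X; μ] * √Var[Y; μ] := by
  rw [← Real.sqrt_mul (variance_nonneg X μ)]
  exact (le_abs_self _).trans
    (Real.abs_le_sqrt (covariance_sq_le_variance_mul_variance hX hY))

lemma sq_sqrt_variance_sub_sqrt_variance_le_variance_sub [IsFiniteMeasure μ]
    (hX : MemLp X 2 μ) (hY : MemLp Y 2 μ) :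
    (√Var[X; μ] - √Var[Y; μ]) ^ 2 ≤ Var[X - Y; μ] := by
  rw [variance_sub hX hY, sub_sq, Real.sq_sqrt (variance_nonneg X μ),
    Real.sq_sqrt (variance_nonneg Y μ)]
  linarith [covariance_le_sqrt_variance_mul_sqrt_variance hX hY]

lemma integral_sq_eq_sq_integral_add_variance [IsProbabilityMeasure μ] (hX : MemLp X 2 μ) :
    ∫ ω, X ω ^ 2 ∂μ = (∫ ω, X ω ∂μ) ^ 2 + Var[X; μ] := by
  rw [variance_eq_sub hX]
  simp only [Pi.pow_apply]
  ring

lemma sq_sub_integral_add_sq_sub_sqrt_variance_le_integral_sq_sub [IsProbabilityMeasure μ]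
    (hX : MemLp X 2 μ) (hY : MemLp Y 2 μ) :
    ((∫ ω, X ω ∂μ) - ∫ ω, Y ω ∂μ) ^ 2 + (√Var[X; μ] - √Var[Y; μ]) ^ 2 ≤
      ∫ ω, (X ω - Y ω) ^ 2 ∂μ := by
  have h := integral_sq_eq_sq_integral_add_variance (hX.sub hY)
  simp only [Pi.sub_apply] at h
  rw [h, integral_sub (hX.integrable one_le_two) (hY.integrable one_le_two)]
  gcongr
  exact sq_sqrt_variance_sub_sqrt_variance_le_variance_sub hX hY

end ProbabilityTheory

/-- For probability measures `p`, `q` on `ℝ` with finite second moments, every coupling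
`π` of `p` and `q` has quadratic transport cost at least
`(μ_p − μ_q)² + (σ_p − σ_q)²`, where `μ` denotes the mean and `σ` the standard
deviation. -/
theorem quadratic_cost_ge_mean_std_gap
    (p q : Measure ℝ) [IsProbabilityMeasure p] [IsProbabilityMeasure q]
    (hp : MemLp (fun x : ℝ => x) 2 p) (hq : MemLp (fun x : ℝ => x) 2 q)
    (π : Measure (ℝ × ℝ)) [IsProbabilityMeasure π]
    (hπ₁ : π.fst = p) (hπ₂ : π.snd = q) :
    ((∫ x, x ∂p) - ∫ x, x ∂q) ^ 2 +
        (Real.sqrt (variance (fun x => x) p) - Real.sqrt (variance (fun x => x) q)) ^ 2 ≤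
      ∫ z, (z.1 - z.2) ^ 2 ∂π := by
  have h_fst : MeasurePreserving Prod.fst π p := ⟨measurable_fst, hπ₁⟩
  have h_snd : MeasurePreserving Prod.snd π q := ⟨measurable_snd, hπ₂⟩
  have mean_fst : ∫ z, z.1 ∂π = ∫ x, x ∂p := by
    rw [← h_fst.map_eq,
      integral_map measurable_fst.aemeasurable measurable_id'.aestronglyMeasurable]
  have mean_snd : ∫ z, z.2 ∂π = ∫ x, x ∂q := by
    rw [← h_snd.map_eq,
      integral_map measurable_snd.aemeasurable measurable_id'.aestronglyMeasurable]
  have key := sq_sub_integral_add_sq_sub_sqrt_variance_le_integral_sq_sub (X := Prod.fst)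
    (Y := Prod.snd) (hp.comp_measurePreserving h_fst) (hq.comp_measurePreserving h_snd)
  rwa [mean_fst, mean_snd, h_fst.variance_fun_comp hp.aemeasurable,
    h_snd.variance_fun_comp hq.aemeasurable] at key
end
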